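/- arXiv:2301.07090 — 2 statements merged into one kernel-verified Lean document; each statement's English description precedes it below -/
import Mathlib

section
/- Let n ≥ 2 and let k, i, j satisfy 1 ≤ k < i < j ≤ n. Set τ = s_{k+1} ⋯ s_{j−1} ∘ s_k ∘ s_{k+1} ⋯ s_{i−1} ∈ S_n (equal to τ^{n,k}_{i,j}). Then for every m with i ≤ m ≤ j−1, the bigrassmannian element u_m = s_k s_{k+1} ⋯ s_m satisfies u_m ≤_B s_k ∘ τ and ¬(u_m ≤_B τ). -/
/-- The adjacent transposition `s_l = (l, l+1)` (0-indexed), interpreted as the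
identity out of range. -/
def sT (n l : ℕ) : Equiv.Perm (Fin n) :=
  if h : l + 1 < n then Equiv.swap ⟨l, Nat.lt_of_succ_lt h⟩ ⟨l + 1, h⟩ else 1

/-- The product `s_a s_{a+1} ⋯ s_b`, composed right to left (identity if `b < a`). -/
def ascProd (n a b : ℕ) : Equiv.Perm (Fin n) :=
  ((List.range' a (b + 1 - a)).map (sT n)).prod

/-- The Bruhat order on `S_n` via the rank-matrix criterion:
`u ≤_B w` iff for all `p q`, `#{i ≤ p : u i ≥ q} ≤ #{i ≤ p : w i ≥ q}`. -/
def bruhatLE {n : ℕ} (u w : Equiv.Perm (Fin n)) : Prop :=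
  ∀ p q : Fin n,
    (Finset.univ.filter (fun i : Fin n => i ≤ p ∧ q ≤ u i)).card ≤
      (Finset.univ.filter (fun i : Fin n => i ≤ p ∧ q ≤ w i)).card

/-!
Indices are 0-based. Write `u = u_m`, `w = s_k τ` and `r_v(p, q) = #{x ≤ p : q ≤ v x}`.
The permutation `u` is the cycle `k ↦ k+1 ↦ ⋯ ↦ m+1 ↦ k`; `τ` sends `i ↦ k`, `j ↦ k+1`,
`x ↦ x+2` on `[k, i)`, `x ↦ x+1` on `(i, j)` and fixes everything else; `w` is `τ` with the
values `k` and `k+1` exchanged.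

For `p < i`, `u ≤ w` pointwise on `[0, p]`. For `i ≤ p < j`, precomposing `u` with the cycle
`k ↦ ⋯ ↦ i ↦ k` leaves `r_u(p, ·)` unchanged, since that cycle permutes `[0, p]`, and makes
`u` pointwise below `w` on `[0, p]`. For `p ≥ j` both `u` and `w` permute `[0, p]`, so both
have the rank function of the identity there. Finally `r_τ(m, k+1) < r_u(m, k+1)`: every
position counted for `τ` is counted for `u`, and position `i` is counted for `u` only,
since `u i = i+1` but `τ i = k`.
-/

open Finset

section BruhatRank

variable {n : ℕ}

def bruhatRank (u : Equiv.Perm (Fin n)) (p q : Fin n) : ℕ :=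
  #{i | i ≤ p ∧ q ≤ u i}

theorem bruhatLE_iff {u w : Equiv.Perm (Fin n)} :
    bruhatLE u w ↔ ∀ p q, bruhatRank u p q ≤ bruhatRank w p q :=
  Iff.rfl

theorem bruhatRank_le_of_imp {u w : Equiv.Perm (Fin n)} {p q : Fin n}
    (h : ∀ x ≤ p, q ≤ u x → q ≤ w x) : bruhatRank u p q ≤ bruhatRank w p q :=
  card_le_card fun x hx => by
    simp only [mem_filter, mem_univ, true_and] at hx ⊢
    exact ⟨hx.1, h x hx.1 hx.2⟩

theorem bruhatRank_lt_of_imp {u w : Equiv.Perm (Fin n)} {p q : Fin n}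
    (h : ∀ x ≤ p, q ≤ u x → q ≤ w x) {x : Fin n} (hxp : x ≤ p) (hux : ¬q ≤ u x)
    (hwx : q ≤ w x) : bruhatRank u p q < bruhatRank w p q := by
  refine card_lt_card ((ssubset_iff_of_subset fun y hy => ?_).2 ⟨x, ?_, ?_⟩)
  · simp only [mem_filter, mem_univ, true_and] at hy ⊢
    exact ⟨hy.1, h y hy.1 hy.2⟩
  · simpa using ⟨hxp, hwx⟩
  · simp [hux]

theorem bruhatRank_mul_of_mapsTo (u : Equiv.Perm (Fin n)) {g : Equiv.Perm (Fin n)} {p : Fin n}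
    (hg : Set.MapsTo g (Set.Iic p) (Set.Iic p)) (q : Fin n) :
    bruhatRank (u * g) p q = bruhatRank u p q := by
  have hbij : Set.BijOn g (Set.Iic p) (Set.Iic p) :=
    ((Set.finite_Iic p).injOn_iff_bijOn_of_mapsTo hg).1 g.injective.injOn
  unfold bruhatRank
  refine card_nbij g (fun x hx => ?_) g.injective.injOn fun y hy => ?_
  · simp only [mem_coe, mem_filter, mem_univ, true_and] at hx ⊢
    exact ⟨hg hx.1, hx.2⟩
  · simp only [mem_coe, mem_filter, mem_univ, true_and] at hy
    obtain ⟨x, hx, rfl⟩ := hbij.surjOn hy.1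
    refine ⟨x, ?_, rfl⟩
    simp only [mem_coe, mem_filter, mem_univ, true_and]
    exact ⟨hx, hy.2⟩

theorem bruhatRank_eq_of_mapsTo {g : Equiv.Perm (Fin n)} {p : Fin n}
    (hg : Set.MapsTo g (Set.Iic p) (Set.Iic p)) (q : Fin n) :
    bruhatRank g p q = bruhatRank 1 p q := by
  simpa using bruhatRank_mul_of_mapsTo 1 hg q

end BruhatRank

theorem val_sT_apply {n l : ℕ} (hl : l + 1 < n) (x : Fin n) :
    (sT n l x : ℕ) = if (x : ℕ) = l then l + 1 else if (x : ℕ) = l + 1 then l else x := by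
  rw [sT, dif_pos hl, Equiv.swap_apply_def]
  split_ifs <;> simp_all [Fin.ext_iff]

theorem ascProd_of_lt {n a b : ℕ} (h : b < a) : ascProd n a b = 1 := by
  simp [ascProd, Nat.sub_eq_zero_of_le h]

theorem ascProd_eq_sT_mul {n a b : ℕ} (h : a ≤ b) :
    ascProd n a b = sT n a * ascProd n (a + 1) b := by
  rw [ascProd, ascProd, show b + 1 - a = b + 1 - (a + 1) + 1 by omega, List.range'_succ]
  simp

theorem val_ascProd_apply {n a b : ℕ} (hab : a ≤ b + 1) (hb : b + 1 < n) (x : Fin n) :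
    (ascProd n a b x : ℕ) =
      if a ≤ (x : ℕ) ∧ (x : ℕ) ≤ b then (x : ℕ) + 1 else if (x : ℕ) = b + 1 then a else x := by
  induction h : b + 1 - a generalizing a with
  | zero =>
    rw [ascProd_of_lt (by omega), Equiv.Perm.one_apply]
    split_ifs <;> omega
  | succ d ih =>
    rw [ascProd_eq_sT_mul (by omega), Equiv.Perm.mul_apply, val_sT_apply (by omega),
      ih (a := a + 1) (by omega) (by omega)]
    split_ifs <;> omega

section Tau

variable {n k i j : ℕ}

def tau (n k i j : ℕ) : Equiv.Perm (Fin n) :=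
  ascProd n (k + 1) (j - 1) * sT n k * ascProd n (k + 1) (i - 1)

theorem val_tau_apply (hki : k < i) (hij : i < j) (hj : j < n) (x : Fin n) :
    (tau n k i j x : ℕ) =
      if (x : ℕ) = i then k else if (x : ℕ) = j then k + 1
      else if k ≤ (x : ℕ) ∧ (x : ℕ) < i then (x : ℕ) + 2
      else if i < (x : ℕ) ∧ (x : ℕ) < j then (x : ℕ) + 1 else x := by
  rw [tau, Equiv.Perm.mul_apply, Equiv.Perm.mul_apply, val_ascProd_apply (by omega) (by omega),
    val_sT_apply (by omega), val_ascProd_apply (by omega) (by omega)]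
  split_ifs <;> omega

theorem val_sT_mul_tau_apply (hki : k < i) (hij : i < j) (hj : j < n) (x : Fin n) :
    ((sT n k * tau n k i j) x : ℕ) =
      if (x : ℕ) = i then k + 1 else if (x : ℕ) = j then k
      else if k ≤ (x : ℕ) ∧ (x : ℕ) < i then (x : ℕ) + 2
      else if i < (x : ℕ) ∧ (x : ℕ) < j then (x : ℕ) + 1 else x := by
  rw [Equiv.Perm.mul_apply, val_sT_apply (by omega), val_tau_apply hki hij hj]
  split_ifs <;> omega

end Tau

section Main

variable {n k i j m : ℕ}

theorem ascProd_bruhatLE_sT_mul_tau (hki : k < i) (hij : i < j) (hj : j < n) (him : i ≤ m)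
    (hmj : m < j) : bruhatLE (ascProd n k m) (sT n k * tau n k i j) := by
  have hu := val_ascProd_apply (n := n) (a := k) (b := m) (by omega) (by omega)
  have hw := val_sT_mul_tau_apply hki hij hj
  refine bruhatLE_iff.2 fun p q => ?_
  rcases lt_or_ge (p : ℕ) i with hpi | hip
  · refine bruhatRank_le_of_imp fun x hx hq => hq.trans (Fin.le_def.2 ?_)
    have := Fin.le_def.1 hx
    rw [hu, hw]
    split_ifs <;> omega
  rcases lt_or_ge (p : ℕ) j with hpj | hjp
  · have hc := val_ascProd_apply (n := n) (a := k) (b := i - 1) (by omega) (by omega)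
    rw [← bruhatRank_mul_of_mapsTo _ (g := ascProd n k (i - 1)) fun x hx => ?_]
    · refine bruhatRank_le_of_imp fun x hx hq => hq.trans (Fin.le_def.2 ?_)
      have := Fin.le_def.1 hx
      rw [Equiv.Perm.mul_apply, hu, hc, hw]
      split_ifs <;> omega
    · simp only [Set.mem_Iic, Fin.le_def] at hx ⊢
      rw [hc]
      split_ifs <;> omega
  · rw [bruhatRank_eq_of_mapsTo (g := ascProd n k m) fun x hx => ?_,
      bruhatRank_eq_of_mapsTo (g := sT n k * tau n k i j) fun x hx => ?_]
    all_goals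
      simp only [Set.mem_Iic, Fin.le_def] at hx ⊢
      first | rw [hu] | rw [hw]
      split_ifs <;> omega

theorem not_ascProd_bruhatLE_tau (hki : k < i) (hij : i < j) (hj : j < n) (him : i ≤ m)
    (hmj : m < j) : ¬bruhatLE (ascProd n k m) (tau n k i j) := by
  have hu := val_ascProd_apply (n := n) (a := k) (b := m) (by omega) (by omega)
  have hτ := val_tau_apply hki hij hj
  intro h
  refine (bruhatLE_iff.1 h ⟨m, by omega⟩ ⟨k + 1, by omega⟩).not_gt <|
    bruhatRank_lt_of_imp (x := ⟨i, by omega⟩) (fun x hx hq => ?_) (Fin.mk_le_mk.2 him) ?_ ?_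
  · simp only [Fin.le_def] at hx hq ⊢
    rw [hτ] at hq
    rw [hu]
    split_ifs at hq ⊢ <;> omega
  · simp [Fin.le_def, hτ]
  · simp only [Fin.le_def, hu]
    split_ifs <;> omega

end Main

theorem stmt10_general (n k i j : ℕ) (hki : k < i) (hij : i < j) (hj : j < n) :
    ∀ m : ℕ, i ≤ m → m ≤ j - 1 →
      bruhatLE (ascProd n k m)
        (sT n k * (ascProd n (k + 1) (j - 1) * sT n k * ascProd n (k + 1) (i - 1))) ∧
      ¬ bruhatLE (ascProd n k m)
        (ascProd n (k + 1) (j - 1) * sT n k * ascProd n (k + 1) (i - 1)) := by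
  intro m him hmj
  exact ⟨ascProd_bruhatLE_sT_mul_tau hki hij hj him (by omega),
    not_ascProd_bruhatLE_tau hki hij hj him (by omega)⟩

/-- For `k < i < j ≤ n-1` and
`τ = (s_{k+1} ⋯ s_{j-1}) ∘ s_k ∘ (s_{k+1} ⋯ s_{i-1}) = τ^{n,k}_{i,j}`:
each bigrassmannian element `u_m = s_k s_{k+1} ⋯ s_m` with `i ≤ m ≤ j-1` satisfies
`u_m ≤_B s_k ∘ τ` and `¬(u_m ≤_B τ)`. -/
theorem stmt10 (n k i j : ℕ) (hn : 2 ≤ n) (hki : k < i) (hij : i < j) (hj : j < n) :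
    ∀ m : ℕ, i ≤ m → m ≤ j - 1 →
      bruhatLE (ascProd n k m)
        (sT n k * (ascProd n (k + 1) (j - 1) * sT n k * ascProd n (k + 1) (i - 1))) ∧
      ¬ bruhatLE (ascProd n k m)
        (ascProd n (k + 1) (j - 1) * sT n k * ascProd n (k + 1) (i - 1)) :=
  stmt10_general n k i j hki hij hj
end

section
/- Let n ≥ 2 and let k, i, j satisfy 1 ≤ i < k and k+1 < j ≤ n. Set τ = (s_{k−1} s_{k−2} ⋯ s_i) ∘ (s_{k+1} s_{k+2} ⋯ s_{j−1}) ∈ S_n (equal to τ^{n,k}_{i,j}). Then each of the bigrassmannian elements u_m = s_k s_{k+1} ⋯ s_m for k ≤ m ≤ j−1 and v_l = s_k s_{k−1} ⋯ s_l for i ≤ l ≤ k−1 satisfies u ≤_B s_k ∘ τ and ¬(u ≤_B τ). -/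
/-- The product `s_a s_{a-1} ⋯ s_b`, composed right to left (identity if `a < b`). -/
def descProd (n a b : ℕ) : Equiv.Perm (Fin n) :=
  ((List.range' b (a + 1 - b)).reverse.map (sT n)).prod

/-!
Every permutation in sight has an explicit formula on values, from which
its rank function `#{x < p | q ≤ f x}` comes out as that of the identity, `p - q`, plus the
indicator of one rectangle (for `u_m`, `v_l`) or two rectangles (for `s_k τ`) in the `(p, q)`
plane. The comparison `u ≤_B s_k τ` is then a containment of rectangles. On the other hand `τ`
maps `{0, …, k}` into itself, so its rank at `p = q = k + 1` is `0`, while `u_m` and `v_l`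
send exactly one of `0, …, k` to `k + 1`.
-/

open Finset

lemma sT_apply_val {n l : ℕ} (h : l + 1 < n) (x : Fin n) :
    (sT n l x : ℕ) = Equiv.swap l (l + 1) (x : ℕ) := by
  simp only [sT, dif_pos h, Equiv.swap_apply_def]
  split_ifs <;> simp_all [Fin.ext_iff]

def ascCycle (a b x : ℕ) : ℕ :=
  if x < a then x else if x ≤ b then x + 1 else if x = b + 1 then a else x

def descCycle (a b x : ℕ) : ℕ :=
  if x < b then x else if x = b then a + 1 else if x ≤ a + 1 then x - 1 else x

lemma ascProd_apply_val {n a b : ℕ} (hab : a ≤ b) (hb : b + 1 < n) (x : Fin n) :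
    (ascProd n a b x : ℕ) = ascCycle a b x := by
  induction b, hab using Nat.le_induction generalizing x with
  | base =>
    rw [ascProd, Nat.add_sub_cancel_left, List.range'_one, List.map_singleton,
      List.prod_singleton, sT_apply_val hb, Equiv.swap_apply_def, ascCycle]
    split_ifs <;> omega
  | succ b hab ih =>
    have hsplit : ascProd n a (b + 1) = ascProd n a b * sT n (b + 1) := by
      rw [ascProd, ascProd, show b + 1 + 1 - a = b + 1 - a + 1 by omega, List.range'_1_concat,
        show a + (b + 1 - a) = b + 1 by omega, List.map_append, List.prod_append,
        List.map_singleton, List.prod_singleton]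
    rw [hsplit, Equiv.Perm.mul_apply, ih (by omega), sT_apply_val hb, Equiv.swap_apply_def]
    simp only [ascCycle]
    split_ifs <;> omega

lemma descProd_apply_val {n a b : ℕ} (hba : b ≤ a) (ha : a + 1 < n) (x : Fin n) :
    (descProd n a b x : ℕ) = descCycle a b x := by
  induction a, hba using Nat.le_induction generalizing x with
  | base =>
    rw [descProd, Nat.add_sub_cancel_left, List.range'_one, List.reverse_singleton,
      List.map_singleton, List.prod_singleton, sT_apply_val ha, Equiv.swap_apply_def, descCycle]
    split_ifs <;> omega
  | succ a hba ih =>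
    have hsplit : descProd n (a + 1) b = sT n (a + 1) * descProd n a b := by
      rw [descProd, descProd, show a + 1 + 1 - b = a + 1 - b + 1 by omega, List.range'_1_concat,
        show b + (a + 1 - b) = a + 1 by omega, List.reverse_append, List.reverse_singleton,
        List.singleton_append, List.map_cons, List.prod_cons]
    rw [hsplit, Equiv.Perm.mul_apply, sT_apply_val ha, ih (by omega), Equiv.swap_apply_def]
    simp only [descCycle]
    split_ifs <;> omega

def tauFun (i k j x : ℕ) : ℕ :=
  if x < i then x else if x = i then k else if x ≤ k then x - 1
  else if x ≤ j - 1 then x + 1 else if x = j then k + 1 else x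

def skTauFun (i k j x : ℕ) : ℕ :=
  if x < i then x else if x = i then k + 1 else if x ≤ k then x - 1
  else if x ≤ j - 1 then x + 1 else if x = j then k else x

section Tau

variable {n i k j : ℕ}

lemma tau_apply_val (hik : i < k) (hkj : k + 1 < j) (hj : j < n) (x : Fin n) :
    ((descProd n (k - 1) i * ascProd n (k + 1) (j - 1)) x : ℕ) = tauFun i k j x := by
  rw [Equiv.Perm.mul_apply, descProd_apply_val (by omega) (by omega),
    ascProd_apply_val (by omega) (by omega)]
  simp only [descCycle, ascCycle, tauFun]
  split_ifs <;> omega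

lemma sT_mul_tau_apply_val (hik : i < k) (hkj : k + 1 < j) (hj : j < n) (x : Fin n) :
    ((sT n k * (descProd n (k - 1) i * ascProd n (k + 1) (j - 1))) x : ℕ) =
      skTauFun i k j x := by
  rw [Equiv.Perm.mul_apply, sT_apply_val (by omega), tau_apply_val hik hkj hj,
    Equiv.swap_apply_def]
  simp only [tauFun, skTauFun]
  split_ifs <;> omega

end Tau

def rankCount (f : ℕ → ℕ) (p q : ℕ) : ℕ :=
  #{x ∈ range p | q ≤ f x}

lemma rankCount_zero (f : ℕ → ℕ) (q : ℕ) : rankCount f 0 q = 0 := by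
  simp [rankCount]

lemma rankCount_succ (f : ℕ → ℕ) (p q : ℕ) :
    rankCount f (p + 1) q = rankCount f p q + if q ≤ f p then 1 else 0 := by
  simp only [rankCount, card_filter, sum_range_succ]

lemma card_filter_eq_rankCount {n : ℕ} {u : Equiv.Perm (Fin n)} {f : ℕ → ℕ}
    (hf : ∀ x, (u x : ℕ) = f x) (p q : Fin n) :
    #{x | x ≤ p ∧ q ≤ u x} = rankCount f (p + 1) q := by
  rw [rankCount, ← card_map Fin.valEmbedding]
  congr 1
  ext y
  simp only [mem_map, mem_filter, mem_univ, true_and, Fin.valEmbedding_apply, mem_range,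
    Fin.le_def, hf]
  constructor
  · rintro ⟨x, ⟨hxp, hqx⟩, rfl⟩
    exact ⟨by omega, hqx⟩
  · rintro ⟨hyp, hqy⟩
    exact ⟨⟨y, by omega⟩, ⟨Nat.lt_succ_iff.1 hyp, hqy⟩, rfl⟩

section Bruhat

variable {n : ℕ} {u w : Equiv.Perm (Fin n)} {f g : ℕ → ℕ}

lemma bruhatLE_of_rankCount_le (hu : ∀ x, (u x : ℕ) = f x) (hw : ∀ x, (w x : ℕ) = g x)
    (h : ∀ p q, rankCount f p q ≤ rankCount g p q) : bruhatLE u w := fun p q => by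
  rw [card_filter_eq_rankCount hu, card_filter_eq_rankCount hw]
  exact h _ _

lemma not_bruhatLE_of_rankCount_lt (hu : ∀ x, (u x : ℕ) = f x) (hw : ∀ x, (w x : ℕ) = g x)
    {p q : ℕ} (hp : p < n) (hq : q < n) (h : rankCount g (p + 1) q < rankCount f (p + 1) q) :
    ¬ bruhatLE u w := fun huw => by
  have := huw ⟨p, hp⟩ ⟨q, hq⟩
  rw [card_filter_eq_rankCount hu, card_filter_eq_rankCount hw] at this
  exact absurd this (not_le.2 h)

end Bruhat

section RankCounts

variable {i k j l m : ℕ}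

lemma rankCount_ascCycle (p q : ℕ) :
    rankCount (ascCycle k m) p q =
      p - q + if k < p ∧ p ≤ m + 1 ∧ k + 1 ≤ q ∧ q ≤ p then 1 else 0 := by
  induction p with
  | zero => rw [rankCount_zero]; split_ifs <;> omega
  | succ p ih =>
    rw [rankCount_succ, ih, ascCycle]
    split_ifs <;> omega

lemma rankCount_descCycle (hlk : l ≤ k) (p q : ℕ) :
    rankCount (descCycle k l) p q =
      p - q + if l < p ∧ p ≤ k + 1 ∧ p ≤ q ∧ q ≤ k + 1 then 1 else 0 := by
  induction p with
  | zero => rw [rankCount_zero]; split_ifs <;> omega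
  | succ p ih =>
    rw [rankCount_succ, ih, descCycle]
    split_ifs <;> omega

lemma rankCount_skTauFun (hik : i < k) (hkj : k + 1 < j) (p q : ℕ) :
    rankCount (skTauFun i k j) p q =
      p - q + if (i < p ∧ p ≤ k + 1 ∧ p ≤ q ∧ q ≤ k + 1) ∨
          (k + 1 < p ∧ p ≤ j ∧ k + 1 ≤ q ∧ q ≤ p) then 1 else 0 := by
  induction p with
  | zero => rw [rankCount_zero]; split_ifs <;> omega
  | succ p ih =>
    rw [rankCount_succ, ih, skTauFun]
    split_ifs <;> omega

lemma rankCount_tauFun_succ_self :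
    rankCount (tauFun i k j) (k + 1) (k + 1) = 0 := by
  refine card_eq_zero.2 (filter_false_of_mem fun x hx => ?_)
  rw [mem_range] at hx
  simp only [tauFun]
  split_ifs <;> omega

end RankCounts

theorem stmt11_general (n k i j : ℕ) (hik : i < k) (hkj : k + 1 < j) (hj : j < n) :
    (∀ m : ℕ, k ≤ m → m ≤ j - 1 →
      bruhatLE (ascProd n k m)
        (sT n k * (descProd n (k - 1) i * ascProd n (k + 1) (j - 1))) ∧
      ¬ bruhatLE (ascProd n k m) (descProd n (k - 1) i * ascProd n (k + 1) (j - 1))) ∧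
    (∀ l : ℕ, i ≤ l → l ≤ k - 1 →
      bruhatLE (descProd n k l)
        (sT n k * (descProd n (k - 1) i * ascProd n (k + 1) (j - 1))) ∧
      ¬ bruhatLE (descProd n k l) (descProd n (k - 1) i * ascProd n (k + 1) (j - 1))) := by
  have hw := sT_mul_tau_apply_val hik hkj hj
  have hτ := tau_apply_val hik hkj hj
  refine ⟨fun m hkm hmj => ?_, fun l hil hlk => ?_⟩
  · have hu := ascProd_apply_val (n := n) hkm (by omega)
    refine ⟨bruhatLE_of_rankCount_le hu hw fun p q => ?_,
      not_bruhatLE_of_rankCount_lt hu hτ (p := k) (q := k + 1) (by omega) (by omega) ?_⟩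
    · rw [rankCount_ascCycle, rankCount_skTauFun hik hkj]
      split_ifs <;> omega
    · rw [rankCount_ascCycle, rankCount_tauFun_succ_self]
      split_ifs <;> omega
  · have hv := descProd_apply_val (n := n) (show l ≤ k by omega) (by omega)
    refine ⟨bruhatLE_of_rankCount_le hv hw fun p q => ?_,
      not_bruhatLE_of_rankCount_lt hv hτ (p := k) (q := k + 1) (by omega) (by omega) ?_⟩
    · rw [rankCount_descCycle (by omega), rankCount_skTauFun hik hkj]
      split_ifs <;> omega
    · rw [rankCount_descCycle (by omega), rankCount_tauFun_succ_self]
      split_ifs <;> omega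

/-- For `i < k`, `k+1 < j ≤ n-1` and
`τ = (s_{k-1} ⋯ s_i) ∘ (s_{k+1} ⋯ s_{j-1}) = τ^{n,k}_{i,j}`:
each of the bigrassmannian elements `u_m = s_k s_{k+1} ⋯ s_m` (`k ≤ m ≤ j-1`) and
`v_l = s_k s_{k-1} ⋯ s_l` (`i ≤ l ≤ k-1`) satisfies `u ≤_B s_k ∘ τ` and
`¬(u ≤_B τ)`. -/
theorem stmt11 (n k i j : ℕ) (hn : 2 ≤ n) (hik : i < k) (hkj : k + 1 < j) (hj : j < n) :
    (∀ m : ℕ, k ≤ m → m ≤ j - 1 →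
      bruhatLE (ascProd n k m)
        (sT n k * (descProd n (k - 1) i * ascProd n (k + 1) (j - 1))) ∧
      ¬ bruhatLE (ascProd n k m) (descProd n (k - 1) i * ascProd n (k + 1) (j - 1))) ∧
    (∀ l : ℕ, i ≤ l → l ≤ k - 1 →
      bruhatLE (descProd n k l)
        (sT n k * (descProd n (k - 1) i * ascProd n (k + 1) (j - 1))) ∧
      ¬ bruhatLE (descProd n k l) (descProd n (k - 1) i * ascProd n (k + 1) (j - 1))) :=
  stmt11_general n k i j hik hkj hj
end
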